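/- arXiv:1908.04970 — 3 statements merged into one kernel-verified Lean document; each statement's English description precedes it below -/
import Mathlib

section
/- Let α > 0, α ≠ 1. With the mass-shifting construction (q = π/r on Ω_1, q = π(1−Π_1/r)/(1−Π_1) on Ω_2, 0 < Π_1 < 1, r > 1), D_α(Π, Q) ≤ (1 − r^{α−1})/(α(1−α)). Consequently, for every ε > 0 there exists r > 1 such that D_α(Π, Q) < ε while sampling from Q chooses the region Ω_2 with probability at least 1 − 1/r. -/
open MeasureTheory

lemma key_integral
    (π : ℝ × ℝ → ℝ) (α P1 : ℝ)
    (hπ : ∀ m, 0 ≤ π m) (hπm : Measurable π) (hπi : Integrable π)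
    (hπdens : ∫ m, π m = 1)
    (hP1 : P1 = ∫ m in {m : ℝ × ℝ | m.1 > m.2}, π m)
    (hP1pos : 0 < P1) (hP1lt : P1 < 1)
    (hα : 0 < α) (hα1 : α ≠ 1)
    (q : ℝ → ℝ × ℝ → ℝ)
    (hqdef : ∀ r m, q r m =
      if m.1 > m.2 then π m / r else π m * (1 - P1 / r) / (1 - P1))
    (r : ℝ) (hr : 1 < r) :
    ∫ m, π m ^ α * q r m ^ (1 - α)
      = r ^ (α - 1) * P1 + ((1 - P1 / r) / (1 - P1)) ^ (1 - α) * (1 - P1) := by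
  have hr0 : (0:ℝ) < r := lt_trans one_pos hr
  set c : ℝ := (1 - P1 / r) / (1 - P1) with hc
  have h1P : (0:ℝ) < 1 - P1 := by linarith
  have hc0 : 0 < c := by
    apply div_pos _ h1P
    have : P1 / r < 1 := (div_lt_one hr0).mpr (lt_trans hP1lt hr)
    linarith
  have hS : MeasurableSet {m : ℝ × ℝ | m.1 > m.2} :=
    measurableSet_lt measurable_snd measurable_fst
  have hαne : α ≠ 0 := ne_of_gt hα
  have h1αne : (1:ℝ) - α ≠ 0 := sub_ne_zero.mpr (Ne.symm hα1)
  -- pointwise identity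
  have hpt : ∀ m, π m ^ α * q r m ^ (1 - α)
      = Set.indicator {m : ℝ × ℝ | m.1 > m.2} (fun m => r ^ (α - 1) * π m) m
        + Set.indicator {m : ℝ × ℝ | m.1 > m.2}ᶜ (fun m => c ^ (1 - α) * π m) m := by
    intro m
    have hpow : π m ^ α * π m ^ (1 - α) = π m := by
      rcases eq_or_lt_of_le (hπ m) with h | h
      · rw [← h, Real.zero_rpow hαne, zero_mul]
      · rw [← Real.rpow_add h, add_sub_cancel, Real.rpow_one]
    by_cases hm : m.1 > m.2
    · rw [Set.indicator_of_mem (show m ∈ {m : ℝ × ℝ | m.1 > m.2} from hm),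
        Set.indicator_of_notMem (show m ∉ {m : ℝ × ℝ | m.1 > m.2}ᶜ by simpa using hm),
        add_zero, hqdef]
      rw [if_pos hm, Real.div_rpow (hπ m) hr0.le]
      rw [div_eq_mul_inv, ← Real.rpow_neg hr0.le, neg_sub, ← mul_assoc, hpow, mul_comm]
    · rw [Set.indicator_of_notMem (show m ∉ {m : ℝ × ℝ | m.1 > m.2} from hm),
        Set.indicator_of_mem (show m ∈ {m : ℝ × ℝ | m.1 > m.2}ᶜ by simpa using hm),
        zero_add, hqdef]
      rw [if_neg hm, mul_div_assoc, Real.mul_rpow (hπ m) hc0.le, ← mul_assoc, hpow,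
        mul_comm]
  have hi1 : Integrable (Set.indicator {m : ℝ × ℝ | m.1 > m.2}
      (fun m => r ^ (α - 1) * π m)) := ((hπi.const_mul _).indicator hS)
  have hi2 : Integrable (Set.indicator ({m : ℝ × ℝ | m.1 > m.2}ᶜ)
      (fun m => c ^ (1 - α) * π m)) := ((hπi.const_mul _).indicator hS.compl)
  have hcomp : ∫ m in ({m : ℝ × ℝ | m.1 > m.2}ᶜ), π m = 1 - P1 := by
    have := integral_add_compl hS hπi (f := π)
    rw [hπdens, ← hP1] at this
    linarith
  calc ∫ m, π m ^ α * q r m ^ (1 - α)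
      = ∫ m, (Set.indicator {m : ℝ × ℝ | m.1 > m.2} (fun m => r ^ (α - 1) * π m) m
        + Set.indicator {m : ℝ × ℝ | m.1 > m.2}ᶜ (fun m => c ^ (1 - α) * π m) m) := by
        exact integral_congr_ae (Filter.Eventually.of_forall hpt)
    _ = r ^ (α - 1) * P1 + c ^ (1 - α) * (1 - P1) := by
        rw [integral_add hi1 hi2, integral_indicator hS, integral_indicator hS.compl,
          integral_const_mul, integral_const_mul, ← hP1, hcomp]

theorem mass_shift_small_divergence_under_exploration
    (π : ℝ × ℝ → ℝ) (α P1 : ℝ)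
    (hπ : ∀ m, 0 ≤ π m) (hπm : Measurable π) (hπi : Integrable π)
    (hπdens : ∫ m, π m = 1)
    (hP1 : P1 = ∫ m in {m : ℝ × ℝ | m.1 > m.2}, π m)
    (hP1pos : 0 < P1) (hP1lt : P1 < 1)
    (hα : 0 < α) (hα1 : α ≠ 1)
    (q : ℝ → ℝ × ℝ → ℝ)
    (hqdef : ∀ r m, q r m =
      if m.1 > m.2 then π m / r else π m * (1 - P1 / r) / (1 - P1)) :
    (∀ r : ℝ, 1 < r →
      (1 - ∫ m, π m ^ α * q r m ^ (1 - α)) / (α * (1 - α))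
        ≤ (1 - r ^ (α - 1)) / (α * (1 - α))) ∧
    (∀ ε : ℝ, 0 < ε → ∃ r : ℝ, 1 < r ∧
      (1 - ∫ m, π m ^ α * q r m ^ (1 - α)) / (α * (1 - α)) < ε ∧
      1 - 1 / r ≤ ∫ m in {m : ℝ × ℝ | m.2 ≥ m.1}, q r m) := by
  have h1P : (0:ℝ) < 1 - P1 := by linarith
  have main : ∀ r : ℝ, 1 < r →
      (1 - ∫ m, π m ^ α * q r m ^ (1 - α)) / (α * (1 - α))
        ≤ (1 - r ^ (α - 1)) / (α * (1 - α)) := by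
    intro r hr
    have hr0 : (0:ℝ) < r := lt_trans one_pos hr
    rw [key_integral π α P1 hπ hπm hπi hπdens hP1 hP1pos hP1lt hα hα1 q hqdef r hr]
    set c : ℝ := (1 - P1 / r) / (1 - P1) with hc
    have hrc : r⁻¹ < c := by
      rw [hc, lt_div_iff₀ h1P, inv_mul_eq_div, div_lt_iff₀ hr0]
      field_simp
      nlinarith
    have hral : r ^ (α - 1) = (r⁻¹) ^ (1 - α) := by
      rw [Real.inv_rpow hr0.le, ← Real.rpow_neg hr0.le, neg_sub]
    rcases lt_or_gt_of_ne hα1 with hlt | hgt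
    · -- α < 1, denominator positive
      have hd : 0 < α * (1 - α) := mul_pos hα (by linarith)
      rw [div_le_div_iff_of_pos_right hd]
      have hkey : r ^ (α - 1) ≤ c ^ (1 - α) := by
        rw [hral]
        exact Real.rpow_le_rpow (inv_nonneg.mpr hr0.le) hrc.le (by linarith)
      nlinarith
    · -- α > 1, denominator negative
      have hd : α * (1 - α) < 0 := mul_neg_of_pos_of_neg hα (by linarith)
      rw [div_le_div_right_of_neg hd]
      have hkey : c ^ (1 - α) ≤ r ^ (α - 1) := by
        rw [hral]
        exact Real.rpow_le_rpow_of_nonpos (inv_pos.mpr hr0) hrc.le (by linarith)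
      nlinarith
  refine ⟨main, ?_⟩
  intro ε hε
  -- continuity argument to pick r near 1
  have hcont : ContinuousAt (fun r : ℝ => (1 - r ^ (α - 1)) / (α * (1 - α))) 1 := by
    apply ContinuousAt.div_const
    exact (continuousAt_const).sub (Real.continuousAt_rpow_const 1 (α - 1) (Or.inl one_ne_zero))
  have hev : ∀ᶠ r in nhds (1:ℝ), (1 - r ^ (α - 1)) / (α * (1 - α)) < ε := by
    have := hcont.eventually_lt_const
      (show (fun r : ℝ => (1 - r ^ (α - 1)) / (α * (1 - α))) 1 < ε by
        simpa [Real.one_rpow] using hε)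
    exact this
  have hev2 : ∀ᶠ r in nhdsWithin (1:ℝ) (Set.Ioi 1),
      (1 - r ^ (α - 1)) / (α * (1 - α)) < ε := nhdsWithin_le_nhds hev
  obtain ⟨r, hrε, hr1⟩ := (hev2.and self_mem_nhdsWithin).exists
  refine ⟨r, hr1, lt_of_le_of_lt (main r hr1) hrε, ?_⟩
  -- set integral of q over complement
  have hr0 : (0:ℝ) < r := lt_trans one_pos hr1
  have hS : MeasurableSet {m : ℝ × ℝ | m.1 > m.2} :=
    measurableSet_lt measurable_snd measurable_fst
  have hsetq : ∫ m in {m : ℝ × ℝ | m.2 ≥ m.1}, q r m = 1 - P1 / r := by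
    have hseteq : {m : ℝ × ℝ | m.2 ≥ m.1} = {m : ℝ × ℝ | m.1 > m.2}ᶜ := by
      ext m; simp [not_lt]
    rw [hseteq]
    have : ∫ m in ({m : ℝ × ℝ | m.1 > m.2}ᶜ), q r m
        = ∫ m in ({m : ℝ × ℝ | m.1 > m.2}ᶜ), ((1 - P1 / r) / (1 - P1)) * π m := by
      apply setIntegral_congr_fun hS.compl
      intro m hm
      simp only [Set.mem_compl_iff, Set.mem_setOf_eq] at hm
      rw [hqdef, if_neg hm]
      ring
    rw [this, integral_const_mul]
    have hcomp : ∫ m in ({m : ℝ × ℝ | m.1 > m.2}ᶜ), π m = 1 - P1 := by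
      have := integral_add_compl hS hπi (f := π)
      rw [hπdens, ← hP1] at this
      linarith
    rw [hcomp]
    field_simp
  rw [hsetq]
  have : P1 / r ≤ 1 / r := by
    rw [div_eq_mul_inv, div_eq_mul_inv, one_mul]
    simpa using mul_le_mul_of_nonneg_right hP1lt.le (inv_nonneg.mpr hr0.le)
  linarith
end

section
/- Let M_1, M_2 be real random variables such that D = M_1 − M_2 is independent of M_2. Suppose at every round the observed history H_{t−1} depends only on rewards from arm 2, so that M_1 and H_{t−1} are conditionally independent given M_2. Then D is independent of H_{t−1}; in particular P(M_1 < M_2 | H_{t−1}) = P(M_1 < M_2) for all t. -/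
open MeasureTheory ProbabilityTheory

section Aux

variable {Ω 𝓗 : Type*} [mΩ : MeasurableSpace Ω] [StandardBorelSpace Ω] [MeasurableSpace 𝓗]
  {μ : Measure Ω} [IsProbabilityMeasure μ]

/-- If `M1` is conditionally independent of `G` given `σ(M2)`, then so is the pair
`(M1, M2)`, since `M2` is `σ(M2)`-measurable. -/
lemma pair_condIndepFun_aux (M1 M2 : Ω → ℝ) (hM1 : Measurable M1) (hM2 : Measurable M2)
    (G : Ω → 𝓗) (hG : Measurable G)
    (hcond : CondIndepFun (MeasurableSpace.comap M2 inferInstance) hM2.comap_le M1 G μ) :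
    CondIndepFun (MeasurableSpace.comap M2 inferInstance) hM2.comap_le
      (fun ω => (M1 ω, M2 ω)) G μ := by
  have hpair : Measurable (fun ω => (M1 ω, M2 ω)) := hM1.prodMk hM2
  have hkey := (condIndepFun_iff_condExp_inter_preimage_eq_mul
    (m' := MeasurableSpace.comap M2 inferInstance) (hm' := hM2.comap_le)
    (μ := μ) hM1 hG).mp hcond
  rw [condIndepFun_iff_condIndep]
  -- π-systems
  set R : Set (Set (ℝ × ℝ)) :=
    Set.image2 (· ×ˢ ·) { s : Set ℝ | MeasurableSet s } { t : Set ℝ | MeasurableSet t } with hR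
  set p1 : Set (Set Ω) := (fun S => (fun ω => (M1 ω, M2 ω)) ⁻¹' S) '' R with hp1
  set p2 : Set (Set Ω) := (fun S => G ⁻¹' S) '' { s : Set 𝓗 | MeasurableSet s } with hp2
  have hgen1 : MeasurableSpace.comap (fun ω => (M1 ω, M2 ω)) inferInstance
      = MeasurableSpace.generateFrom p1 := by
    conv_lhs => rw [← generateFrom_prod]
    rw [MeasurableSpace.comap_generateFrom]
  have hgen2 : MeasurableSpace.comap G inferInstance = MeasurableSpace.generateFrom p2 := by
    conv_lhs => rw [← MeasurableSpace.generateFrom_measurableSet (α := 𝓗)]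
    rw [MeasurableSpace.comap_generateFrom]
  have hpi1 : IsPiSystem p1 := IsPiSystem.comap isPiSystem_prod _
  have hpi2 : IsPiSystem p2 := IsPiSystem.comap MeasurableSpace.isPiSystem_measurableSet _
  have hp1m : ∀ s ∈ p1, MeasurableSet s := by
    rintro s ⟨S, hS, rfl⟩
    obtain ⟨u, hu, v, hv, rfl⟩ := hS
    exact hpair ((show MeasurableSet u from hu).prod (show MeasurableSet v from hv))
  have hp2m : ∀ s ∈ p2, MeasurableSet s := by
    rintro s ⟨S, hS, rfl⟩
    exact hG (show MeasurableSet S from hS)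
  refine CondIndepSets.condIndep (hm' := hM2.comap_le) (hgen1 ▸ hpair.comap_le)
    (hgen2 ▸ hG.comap_le) hpi1 hpi2 hgen1 hgen2 ?_
  refine (condIndepSets_iff _ hM2.comap_le p1 p2 hp1m hp2m μ).mpr ?_
  rintro a b ⟨S, hS, rfl⟩ ⟨B, hBmem, rfl⟩
  obtain ⟨u, hu', v, hv', rfl⟩ := hS
  have hu : MeasurableSet u := hu'
  have hv : MeasurableSet v := hv'
  have hB : MeasurableSet B := hBmem
  have ha : (fun ω => (M1 ω, M2 ω)) ⁻¹' (u ×ˢ v) = M2 ⁻¹' v ∩ M1 ⁻¹' u := by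
    rw [Set.mk_preimage_prod, Set.inter_comm]
  have hvm : MeasurableSet[MeasurableSpace.comap M2 inferInstance] (M2 ⁻¹' v) := ⟨v, hv, rfl⟩
  have hint1 : Integrable ((M1 ⁻¹' u ∩ G ⁻¹' B).indicator (fun _ => (1 : ℝ))) μ :=
    (integrable_const (1 : ℝ)).indicator ((hM1 hu).inter (hG hB))
  have hint2 : Integrable ((M1 ⁻¹' u).indicator (fun _ => (1 : ℝ))) μ :=
    (integrable_const (1 : ℝ)).indicator (hM1 hu)
  have e1 : (μ⟦(fun ω => (M1 ω, M2 ω)) ⁻¹' (u ×ˢ v) ∩ G ⁻¹' B |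
        MeasurableSpace.comap M2 inferInstance⟧)
      =ᵐ[μ] (M2 ⁻¹' v).indicator
        (μ⟦M1 ⁻¹' u ∩ G ⁻¹' B | MeasurableSpace.comap M2 inferInstance⟧) := by
    have hset : (fun ω => (M1 ω, M2 ω)) ⁻¹' (u ×ˢ v) ∩ G ⁻¹' B
        = M2 ⁻¹' v ∩ (M1 ⁻¹' u ∩ G ⁻¹' B) := by
      rw [ha, Set.inter_assoc]
    rw [hset]
    have hind : (M2 ⁻¹' v ∩ (M1 ⁻¹' u ∩ G ⁻¹' B)).indicator (fun _ => (1 : ℝ))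
        = (M2 ⁻¹' v).indicator ((M1 ⁻¹' u ∩ G ⁻¹' B).indicator (fun _ => (1 : ℝ))) := by
      rw [Set.indicator_indicator]
    rw [hind]
    exact condExp_indicator hint1 hvm
  have e2 : (μ⟦(fun ω => (M1 ω, M2 ω)) ⁻¹' (u ×ˢ v) |
        MeasurableSpace.comap M2 inferInstance⟧)
      =ᵐ[μ] (M2 ⁻¹' v).indicator (μ⟦M1 ⁻¹' u | MeasurableSpace.comap M2 inferInstance⟧) := by
    rw [ha]
    have hind : (M2 ⁻¹' v ∩ M1 ⁻¹' u).indicator (fun _ => (1 : ℝ))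
        = (M2 ⁻¹' v).indicator ((M1 ⁻¹' u).indicator (fun _ => (1 : ℝ))) := by
      rw [Set.indicator_indicator]
    rw [hind]
    exact condExp_indicator hint2 hvm
  have e3 := hkey u B hu hB
  filter_upwards [e1, e2, e3] with ω h1 h2 h3
  rw [Pi.mul_apply, h1, h2]
  by_cases hω : ω ∈ M2 ⁻¹' v
  · simp [Set.indicator_of_mem hω, h3]
  · simp [Set.indicator_of_notMem hω]

end Aux

theorem gap_independent_of_history
    {Ω 𝓗 : Type*} [MeasurableSpace Ω] [StandardBorelSpace Ω]
    [MeasurableSpace 𝓗]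
    (μ : Measure Ω) [IsProbabilityMeasure μ]
    (M1 M2 : Ω → ℝ) (hM1 : Measurable M1) (hM2 : Measurable M2)
    (H : ℕ → Ω → 𝓗) (hH : ∀ t, Measurable (H t))
    (hgap : IndepFun (fun ω => M1 ω - M2 ω) M2 μ)
    (hcond : ∀ t, CondIndepFun (MeasurableSpace.comap M2 inferInstance)
      hM2.comap_le M1 (H t) μ) :
    (∀ t, IndepFun (fun ω => M1 ω - M2 ω) (H t) μ) ∧
    (∀ t, ∀ B : Set 𝓗, MeasurableSet B →
      μ ({ω | M1 ω < M2 ω} ∩ H t ⁻¹' B)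
        = μ {ω | M1 ω < M2 ω} * μ (H t ⁻¹' B)) := by
  have hD : Measurable (fun ω => M1 ω - M2 ω) := hM1.sub hM2
  -- the gap is conditionally independent of the history given σ(M2)
  have hDcond : ∀ t, CondIndepFun (MeasurableSpace.comap M2 inferInstance)
      hM2.comap_le (fun ω => M1 ω - M2 ω) (H t) μ := by
    intro t
    have hpair := pair_condIndepFun_aux M1 M2 hM1 hM2 (H t) (hH t) (hcond t)
    have h := hpair.comp (φ := fun p : ℝ × ℝ => p.1 - p.2) (ψ := id)
      (measurable_fst.sub measurable_snd) measurable_id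
    exact h
  -- main independence claim
  have main : ∀ t, IndepFun (fun ω => M1 ω - M2 ω) (H t) μ := by
    intro t
    rw [indepFun_iff_measure_inter_preimage_eq_mul]
    intro S B hS hB
    have hAm : MeasurableSet ((fun ω => M1 ω - M2 ω) ⁻¹' S) := hD hS
    have hCm : MeasurableSet (H t ⁻¹' B) := (hH t) hB
    have h1 := ((condIndepFun_iff_condExp_inter_preimage_eq_mul
      (m' := MeasurableSpace.comap M2 inferInstance) (hm' := hM2.comap_le)
      (μ := μ) hD (hH t)).mp (hDcond t)) S B hS hB
    -- E[1_A | σ(M2)] is a.e. constant, by independence of the gap and M2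
    have hindep : ProbabilityTheory.Indep
        (MeasurableSpace.comap (fun ω => M1 ω - M2 ω) inferInstance)
        (MeasurableSpace.comap M2 inferInstance) μ :=
      (IndepFun_iff_Indep _ _ _).mp hgap
    have hsm : StronglyMeasurable[MeasurableSpace.comap (fun ω => M1 ω - M2 ω) inferInstance]
        (((fun ω => M1 ω - M2 ω) ⁻¹' S).indicator (fun _ => (1 : ℝ))) :=
      stronglyMeasurable_const.indicator ⟨S, hS, rfl⟩
    have h2 : (μ⟦(fun ω => M1 ω - M2 ω) ⁻¹' S | MeasurableSpace.comap M2 inferInstance⟧)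
        =ᵐ[μ] fun _ => (μ ((fun ω => M1 ω - M2 ω) ⁻¹' S)).toReal := by
      have h := condExp_indep_eq hD.comap_le hM2.comap_le hsm hindep
      refine h.trans ?_
      have hi : ∫ x, ((fun ω => M1 ω - M2 ω) ⁻¹' S).indicator (fun _ => (1 : ℝ)) x ∂μ
          = (μ ((fun ω => M1 ω - M2 ω) ⁻¹' S)).toReal := by
        rw [integral_indicator_const _ hAm, smul_eq_mul, mul_one, measureReal_def]
      rw [hi]
    -- compute in ℝ
    have hreal : (μ ((fun ω => M1 ω - M2 ω) ⁻¹' S ∩ H t ⁻¹' B)).toReal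
        = (μ ((fun ω => M1 ω - M2 ω) ⁻¹' S)).toReal * (μ (H t ⁻¹' B)).toReal := by
      have l1 : (μ ((fun ω => M1 ω - M2 ω) ⁻¹' S ∩ H t ⁻¹' B)).toReal
          = ∫ ω, (μ⟦(fun ω => M1 ω - M2 ω) ⁻¹' S ∩ H t ⁻¹' B |
              MeasurableSpace.comap M2 inferInstance⟧) ω ∂μ := by
        rw [integral_condExp hM2.comap_le, integral_indicator_const _ (hAm.inter hCm),
          smul_eq_mul, mul_one, measureReal_def]
      have l2 : ∫ ω, (μ⟦(fun ω => M1 ω - M2 ω) ⁻¹' S ∩ H t ⁻¹' B |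
              MeasurableSpace.comap M2 inferInstance⟧) ω ∂μ
          = ∫ ω, (μ ((fun ω => M1 ω - M2 ω) ⁻¹' S)).toReal
              * (μ⟦H t ⁻¹' B | MeasurableSpace.comap M2 inferInstance⟧) ω ∂μ := by
        refine integral_congr_ae ?_
        filter_upwards [h1, h2] with ω hω1 hω2
        rw [hω1, hω2]
      have l3 : ∫ ω, (μ ((fun ω => M1 ω - M2 ω) ⁻¹' S)).toReal
              * (μ⟦H t ⁻¹' B | MeasurableSpace.comap M2 inferInstance⟧) ω ∂μ
          = (μ ((fun ω => M1 ω - M2 ω) ⁻¹' S)).toReal * (μ (H t ⁻¹' B)).toReal := by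
        rw [integral_const_mul, integral_condExp hM2.comap_le, integral_indicator_const _ hCm,
          smul_eq_mul, mul_one, measureReal_def]
      rw [l1, l2, l3]
    rw [← ENNReal.toReal_eq_toReal_iff' (measure_ne_top μ _)
      (ENNReal.mul_ne_top (measure_ne_top μ _) (measure_ne_top μ _)), ENNReal.toReal_mul]
    exact hreal
  refine ⟨main, fun t B hB => ?_⟩
  have hset : {ω | M1 ω < M2 ω} = (fun ω => M1 ω - M2 ω) ⁻¹' (Set.Iio 0) := by
    ext ω
    simp [sub_neg]
  rw [hset]
  exact (main t).measure_inter_preimage_eq_mul _ _ measurableSet_Iio hB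
end

section
/- Let k ≥ 2 and let (Π̄_t)_t and (Q̄_t)_t be sequences of probability distributions on {1,…,k}. Suppose Π̄_t(1) → 1 as t → ∞ and KL(Q̄_t, Π̄_t) < ε for all t, for some fixed ε > 0. Then Q̄_t(1) → 1 as t → ∞. -/
open Filter

theorem reverse_KL_concentration_transfer (k : ℕ) (hk : 2 ≤ k) (ε : ℝ) (hε : 0 < ε)
    (P Q : ℕ → Fin k → ℝ)
    (hP0 : ∀ t i, 0 ≤ P t i) (hQ0 : ∀ t i, 0 ≤ Q t i)
    (hPsum : ∀ t, ∑ i, P t i = 1) (hQsum : ∀ t, ∑ i, Q t i = 1)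
    (hPlim : Filter.Tendsto (fun t => P t ⟨0, by omega⟩) Filter.atTop (nhds 1))
    (habs : ∀ t i, P t i = 0 → Q t i = 0)
    (hKL : ∀ t, ∑ i, Q t i * Real.log (Q t i / P t i) < ε) :
    Filter.Tendsto (fun t => Q t ⟨0, by omega⟩) Filter.atTop (nhds 1) := by
  set i0 : Fin k := ⟨0, by omega⟩ with hi0
  have hxlogx : ∀ x : ℝ, 0 < x → x - 1 ≤ x * Real.log x := by
    intro x hx
    have h1 : Real.log x⁻¹ ≤ x⁻¹ - 1 := Real.log_le_sub_one_of_pos (by positivity)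
    rw [Real.log_inv] at h1
    have hx' : x ≠ 0 := ne_of_gt hx
    have h2 := mul_le_mul_of_nonneg_left h1 hx.le
    have h3 : x * x⁻¹ = 1 := mul_inv_cancel₀ hx'
    nlinarith
  rw [Metric.tendsto_atTop] at hPlim ⊢
  intro δ hδ
  have hk2 : (2:ℝ) ≤ (k:ℝ) := by exact_mod_cast hk
  have hCpos : (0:ℝ) < ε + k - 1 := by linarith
  obtain ⟨N, hN⟩ := hPlim (Real.exp (-((ε + k - 1)/δ))) (Real.exp_pos _)
  refine ⟨N, fun t ht => ?_⟩
  have hPle1 : P t i0 ≤ 1 := by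
    rw [← hPsum t]
    exact Finset.single_le_sum (fun i _ => hP0 t i) (Finset.mem_univ i0)
  have hQle1 : Q t i0 ≤ 1 := by
    rw [← hQsum t]
    exact Finset.single_le_sum (fun i _ => hQ0 t i) (Finset.mem_univ i0)
  have hdist := hN t ht
  rw [Real.dist_eq] at hdist
  have h1P : 1 - P t i0 < Real.exp (-((ε + k - 1)/δ)) := by
    have := (abs_lt.mp hdist).1; linarith
  by_cases hp1 : P t i0 = 1
  · have hrest : ∑ i ∈ Finset.univ.erase i0, P t i = 0 := by
      have h2 := Finset.add_sum_erase Finset.univ (P t) (Finset.mem_univ i0)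
      rw [hPsum t] at h2; linarith
    have hz : ∀ i ∈ Finset.univ.erase i0, Q t i = 0 := by
      intro i hi
      exact habs t i ((Finset.sum_eq_zero_iff_of_nonneg (fun j _ => hP0 t j)).mp hrest i hi)
    have hQeq : Q t i0 = 1 := by
      have h2 := Finset.add_sum_erase Finset.univ (Q t) (Finset.mem_univ i0)
      rw [hQsum t, Finset.sum_eq_zero hz] at h2
      linarith
    simpa [hQeq] using hδ
  · have hp_lt : P t i0 < 1 := lt_of_le_of_ne hPle1 hp1
    set p := P t i0 with hp
    set L : ℝ := -Real.log (1 - p) with hL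
    have h1ppos : 0 < 1 - p := by linarith
    have hLgt : (ε + k - 1)/δ < L := by
      have hlg := Real.log_lt_log h1ppos h1P
      rw [Real.log_exp] at hlg
      rw [hL]; linarith
    have hLpos : 0 < L := lt_trans (by positivity) hLgt
    set s := ∑ i ∈ Finset.univ.erase i0, Q t i with hs
    have hs0 : 0 ≤ s := Finset.sum_nonneg fun i _ => hQ0 t i
    have hsQ : Q t i0 + s = 1 := by
      rw [hs, Finset.add_sum_erase Finset.univ (Q t) (Finset.mem_univ i0), hQsum t]
    have h0term : Q t i0 - 1 ≤ Q t i0 * Real.log (Q t i0 / p) := by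
      rcases eq_or_lt_of_le (hQ0 t i0) with h | h
      · simp [← h]
      · have hp0 : 0 < p := by
          rcases eq_or_lt_of_le (hP0 t i0) with h' | h'
          · exact absurd (habs t i0 h'.symm) (ne_of_gt h)
          · exact h'
        rw [Real.log_div (ne_of_gt h) (ne_of_gt hp0)]
        have h1 := hxlogx _ h
        have h2 : Real.log p ≤ 0 := Real.log_nonpos hp0.le hPle1
        nlinarith
    have hterm : ∀ i ∈ Finset.univ.erase i0,
        Q t i - 1 + Q t i * L ≤ Q t i * Real.log (Q t i / P t i) := by
      intro i hi
      rcases eq_or_lt_of_le (hQ0 t i) with h | h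
      · rw [← h]; simp
      · have hpi0 : 0 < P t i := by
          rcases eq_or_lt_of_le (hP0 t i) with h' | h'
          · exact absurd (habs t i h'.symm) (ne_of_gt h)
          · exact h'
        have hpile : P t i ≤ 1 - p := by
          have hrest : ∑ j ∈ Finset.univ.erase i0, P t j = 1 - p := by
            have h2 := Finset.add_sum_erase Finset.univ (P t) (Finset.mem_univ i0)
            rw [hPsum t] at h2; linarith
          calc P t i ≤ ∑ j ∈ Finset.univ.erase i0, P t j :=
                Finset.single_le_sum (fun j _ => hP0 t j) hi
            _ = 1 - p := hrest
        have hlog : Real.log (P t i) ≤ Real.log (1 - p) := Real.log_le_log hpi0 hpile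
        rw [Real.log_div (ne_of_gt h) (ne_of_gt hpi0), mul_sub]
        have h1 := hxlogx _ h
        have h3 : Q t i * Real.log (P t i) ≤ Q t i * (-L) := by
          rw [hL, neg_neg]
          exact mul_le_mul_of_nonneg_left hlog (hQ0 t i)
        linarith
    have hsum1 : ∑ i ∈ Finset.univ.erase i0, (Q t i - 1 + Q t i * L)
        = s - ((k:ℝ) - 1) + s * L := by
      rw [Finset.sum_add_distrib, Finset.sum_sub_distrib, ← Finset.sum_mul,
        Finset.sum_const, Finset.card_erase_of_mem (Finset.mem_univ i0),
        Finset.card_univ, Fintype.card_fin, nsmul_eq_mul, mul_one, ← hs]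
      have : ((k - 1 : ℕ) : ℝ) = (k:ℝ) - 1 := by
        have : 1 ≤ k := by omega
        push_cast [Nat.cast_sub this]
        ring
      rw [this]
    have hklb : (1 - (k:ℝ)) + L * s ≤ ∑ i, Q t i * Real.log (Q t i / P t i) := by
      calc (1 - (k:ℝ)) + L * s
          = (Q t i0 - 1) + (s - ((k:ℝ) - 1) + s * L) := by
            rw [← hsQ] at *; ring
        _ = (Q t i0 * Real.log (Q t i0 / p) - (Q t i0 * Real.log (Q t i0 / p) - (Q t i0 - 1)))
            + (s - ((k:ℝ) - 1) + s * L) := by ring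
        _ ≤ Q t i0 * Real.log (Q t i0 / P t i0)
            + ∑ i ∈ Finset.univ.erase i0, Q t i * Real.log (Q t i / P t i) := by
            rw [hsum1.symm]
            exact add_le_add (by linarith) (Finset.sum_le_sum hterm)
        _ = ∑ i, Q t i * Real.log (Q t i / P t i) :=
            Finset.add_sum_erase Finset.univ (fun i => Q t i * Real.log (Q t i / P t i))
              (Finset.mem_univ i0)
    have hfin : s * L < ε + (k:ℝ) - 1 := by
      have hk2' : 1 - (k:ℝ) + L * s < ε := lt_of_le_of_lt hklb (hKL t)
      rw [mul_comm]
      linarith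
    have hsδ : s < δ := by
      by_contra hcon
      push_neg at hcon
      have h4 : δ * L ≤ s * L := mul_le_mul_of_nonneg_right hcon hLpos.le
      have h5 : ε + (k:ℝ) - 1 < δ * L := by
        rw [div_lt_iff₀ hδ] at hLgt
        nlinarith
      linarith
    rw [Real.dist_eq, abs_of_nonpos (by linarith : Q t i0 - 1 ≤ 0)]
    linarith
end
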